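/- arXiv:2005.06688 — 4 statements merged into one kernel-verified Lean document; each statement's English description precedes it below -/
import Mathlib

section
/- Given a valid independence relation I on an LTS, any interleaving (topological linearization) of the partial-order run obtained from a run σ by removing order between independent actions is itself a run of the LTS and reaches the same set of states as σ. -/
/-- A labeled transition system with an initial state. -/
structure LTS (S A : Type*) where
  tr : S → A → S → Prop
  init : S

namespace LTS

variable {S A : Type*} (M : LTS S A)

/-- An action is enabled at a state if some transition fires it. -/
def Enabled (a : A) (s : S) : Prop := ∃ s', M.tr s a s'

/-- One symbolic step on a set of states. -/
def stepSet (X : Set S) (a : A) : Set S := {s' | ∃ s ∈ X, M.tr s a s'}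

/-- `statesFrom s σ` is the set of states reachable from `s` executing `σ`. -/
def statesFrom (s : S) (σ : List A) : Set S := σ.foldl M.stepSet {s}

/-- A state is reachable if some word reaches it from the initial state. -/
def Reachable (s : S) : Prop := ∃ σ : List A, s ∈ M.statesFrom M.init σ

end LTS

/-- Swapping two adjacent independent actions. -/
def SwapAdj {A : Type*} (I : A → A → Prop) (x y : List A) : Prop :=
  ∃ (u v : List A) (a b : A), I a b ∧ x = u ++ a :: b :: v ∧ y = u ++ b :: a :: v

/-- Mazurkiewicz trace equivalence. -/
def TraceEquiv {A : Type*} (I : A → A → Prop) : List A → List A → Prop :=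
  Relation.EqvGen (SwapAdj I)

/-- Validity of an independence relation: at every reachable state, firing one
action of an independent pair preserves enabledness of the other, and firing
both in either order reaches the same set of states. -/
def ValidIndependence {S A : Type*} (M : LTS S A) (I : A → A → Prop) : Prop :=
  ∀ s, M.Reachable s → ∀ a b, I a b →
    ((∀ s', M.tr s a s' → (M.Enabled b s ↔ M.Enabled b s')) ∧
     (M.Enabled a s → M.Enabled b s →
        M.statesFrom s [a, b] = M.statesFrom s [b, a]))

/-- The happens-before order of the partial-order run of `σ`: position `i`
precedes position `j` iff they are ordered by the transitive closure of
"earlier and dependent". -/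
def PORun {S A : Type*} (_M : LTS S A) (I : A → A → Prop) (σ : List A) :
    Fin σ.length → Fin σ.length → Prop :=
  Relation.TransGen (fun i j => (i : ℕ) < (j : ℕ) ∧ ¬ I (σ.get i) (σ.get j))

/-- `τ` is an interleaving (topological linearization) of the partial-order run
of `σ`: the label sequence of some order-respecting permutation of positions. -/
def IsInterleaving {S A : Type*} (M : LTS S A) (I : A → A → Prop)
    (σ τ : List A) : Prop :=
  ∃ f : Fin σ.length ≃ Fin σ.length,
    (∀ i j, PORun M I σ i j → (f i : ℕ) < (f j : ℕ)) ∧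
    τ = List.ofFn (fun k => σ.get (f.symm k))

/-! Validity makes the two orders of an adjacent independent pair reach the same states from
any reachable state (if one order is blocked, so is the other, since firing one action of the
pair does not change whether the other is enabled), so trace-equivalent words reach the same
states. An interleaving is trace equivalent to the run it linearizes: its first letter sits at
a position `p` of `σ` independent of every earlier position, so it bubbles to the front by
swaps of independent neighbours, and induction on the length handles the rest. -/

namespace LTS

variable {S A : Type*} (M : LTS S A) {I : A → A → Prop}

theorem mem_statesFrom_pair {s t : S} {a b : A} :
    t ∈ M.statesFrom s [a, b] ↔ ∃ s', M.tr s a s' ∧ M.tr s' b t := by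
  simp [statesFrom, stepSet]

theorem stepSet_stepSet (X : Set S) (a b : A) :
    M.stepSet (M.stepSet X a) b = ⋃ s ∈ X, M.statesFrom s [a, b] := by
  ext t
  simp only [Set.mem_iUnion, mem_statesFrom_pair, stepSet, Set.mem_ofPred_eq]
  grind

variable {M}

theorem statesFrom_pair_eq_empty (hvalid : ValidIndependence M I) {s : S}
    (hs : M.Reachable s) {a b : A} (hab : I a b) (h : ¬ (M.Enabled a s ∧ M.Enabled b s)) :
    M.statesFrom s [a, b] = ∅ := by
  refine Set.eq_empty_of_forall_notMem fun t ht => h ?_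
  obtain ⟨s', hs', ht'⟩ := (M.mem_statesFrom_pair).1 ht
  exact ⟨⟨s', hs'⟩, ((hvalid s hs a b hab).1 s' hs').2 ⟨t, ht'⟩⟩

theorem statesFrom_pair_comm (hvalid : ValidIndependence M I)
    (hsymm : ∀ a b, I a b → I b a) {s : S} (hs : M.Reachable s) {a b : A} (hab : I a b) :
    M.statesFrom s [a, b] = M.statesFrom s [b, a] := by
  by_cases h : M.Enabled a s ∧ M.Enabled b s
  · exact (hvalid s hs a b hab).2 h.1 h.2
  · rw [statesFrom_pair_eq_empty hvalid hs hab h,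
      statesFrom_pair_eq_empty hvalid hs (hsymm a b hab) (h ∘ And.symm)]

theorem statesFrom_init_eq_of_swapAdj (hvalid : ValidIndependence M I)
    (hsymm : ∀ a b, I a b → I b a) {x y : List A} (h : SwapAdj I x y) :
    M.statesFrom M.init x = M.statesFrom M.init y := by
  obtain ⟨u, v, a, b, hab, rfl, rfl⟩ := h
  simp only [statesFrom, List.foldl_append, List.foldl_cons]
  rw [stepSet_stepSet, stepSet_stepSet]
  exact congrArg (List.foldl M.stepSet · v) <|
    Set.iUnion₂_congr fun s hs => statesFrom_pair_comm hvalid hsymm ⟨u, hs⟩ hab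

theorem statesFrom_init_eq_of_traceEquiv (hvalid : ValidIndependence M I)
    (hsymm : ∀ a b, I a b → I b a) {x y : List A} (h : TraceEquiv I x y) :
    M.statesFrom M.init x = M.statesFrom M.init y :=
  congrArg
    (Quot.lift (M.statesFrom M.init) fun _ _ => statesFrom_init_eq_of_swapAdj hvalid hsymm)
    (Quot.eqvGen_sound h)

end LTS

theorem Fin.exists_equiv_apply_succAbove {n m : ℕ} (e : Fin (n + 1) ≃ Fin (m + 1))
    (p : Fin (n + 1)) :
    ∃ e' : Fin n ≃ Fin m, ∀ i, e (p.succAbove i) = (e p).succAbove (e' i) := by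
  set E := (finSuccEquiv' p).symm.trans (e.trans (finSuccEquiv' (e p)))
  refine ⟨Equiv.removeNone E, fun i => ?_⟩
  have hsome : E (some i) = some (Equiv.removeNone E i) := by
    refine (Equiv.removeNone_some E ?_).symm
    exact Option.ne_none_iff_exists'.1 (by simp [E])
  simpa [E] using hsome

namespace TraceEquiv

variable {A : Type*} {I : A → A → Prop}

theorem cons (a : A) {x y : List A} (h : TraceEquiv I x y) : TraceEquiv I (a :: x) (a :: y) := by
  induction h with
  | rel x y hxy =>
    obtain ⟨u, v, b, c, hbc, rfl, rfl⟩ := hxy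
    exact .rel _ _ ⟨a :: u, v, b, c, hbc, rfl, rfl⟩
  | refl => exact .refl _
  | symm _ _ _ ih => exact .symm _ _ ih
  | trans _ _ _ _ _ ih₁ ih₂ => exact .trans _ _ _ ih₁ ih₂

theorem swap {a b : A} (hab : I a b) (v : List A) : TraceEquiv I (a :: b :: v) (b :: a :: v) :=
  .rel _ _ ⟨[], v, a, b, hab, rfl, rfl⟩

theorem ofFn_cons_succAbove {n : ℕ} (g : Fin (n + 1) → A) (p : Fin (n + 1))
    (h : ∀ i < p, I (g i) (g p)) :
    TraceEquiv I (List.ofFn g) (g p :: List.ofFn (g ∘ p.succAbove)) := by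
  induction n with
  | zero => rw [Fin.fin_one_eq_zero p, List.ofFn_succ]; exact .refl _
  | succ n ih =>
    cases p using Fin.cases with
    | zero => rw [List.ofFn_succ]; exact .refl _
    | succ q =>
      have hrest := ih (g ∘ Fin.succ) q fun i hi => h i.succ (Fin.succ_lt_succ_iff.2 hi)
      rw [List.ofFn_succ, List.ofFn_succ (f := g ∘ q.succ.succAbove)]
      simp only [Function.comp_apply, Fin.succ_succAbove_zero, Fin.succ_succAbove_succ]
      exact .trans _ _ _ (hrest.cons _) (swap (h 0 (Fin.succ_pos q)) _)

theorem ofFn_comp_symm {n : ℕ} (g : Fin n → A) (f : Fin n ≃ Fin n)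
    (hf : ∀ i j, i < j → ¬ I (g i) (g j) → f i < f j) :
    TraceEquiv I (List.ofFn g) (List.ofFn (g ∘ f.symm)) := by
  induction n with
  | zero => exact .refl _
  | succ n ih =>
    set p := f.symm 0
    have hp : f p = 0 := f.apply_symm_apply 0
    obtain ⟨f', hf'⟩ := Fin.exists_equiv_apply_succAbove f p
    rw [hp, Fin.succAbove_zero] at hf'
    have hfirst : ∀ i < p, I (g i) (g p) := fun i hi => by
      by_contra hdep
      simpa [hp] using hf i p hi hdep
    have hrest : TraceEquiv I (List.ofFn (g ∘ p.succAbove))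
        (List.ofFn ((g ∘ p.succAbove) ∘ f'.symm)) := by
      refine ih _ f' fun i j hij hdep => ?_
      rw [← Fin.succ_lt_succ_iff, ← hf', ← hf']
      exact hf _ _ (Fin.strictMono_succAbove p hij) hdep
    have hf'symm : ∀ k, f.symm k.succ = p.succAbove (f'.symm k) := fun k => by
      rw [Equiv.symm_apply_eq, hf', Equiv.apply_symm_apply]
    rw [List.ofFn_succ (f := g ∘ f.symm)]
    simp only [Function.comp_apply, hf'symm]
    exact .trans _ _ _ (ofFn_cons_succAbove g p hfirst) (hrest.cons _)

end TraceEquiv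

theorem interleaving_is_run_same_states_general {S A : Type*} (M : LTS S A)
    (I : A → A → Prop)
    (hsymm : ∀ a b, I a b → I b a)
    (hvalid : ValidIndependence M I)
    (σ τ : List A)
    (hrun : (M.statesFrom M.init σ).Nonempty)
    (hτ : IsInterleaving M I σ τ) :
    (M.statesFrom M.init τ).Nonempty ∧
      M.statesFrom M.init τ = M.statesFrom M.init σ := by
  obtain ⟨f, hf, rfl⟩ := hτ
  have htrace := TraceEquiv.ofFn_comp_symm σ.get f fun i j hij hdep =>
    hf i j (.single ⟨hij, hdep⟩)
  rw [List.ofFn_get] at htrace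
  have hstates := LTS.statesFrom_init_eq_of_traceEquiv hvalid hsymm htrace
  exact ⟨hstates ▸ hrun, hstates.symm⟩

/-- given a valid independence relation, any interleaving of the
partial-order run of a run `σ` is itself a run and reaches the same set of
states as `σ`. -/
theorem interleaving_is_run_same_states {S A : Type*} (M : LTS S A)
    (I : A → A → Prop)
    (hsymm : ∀ a b, I a b → I b a) (hirrefl : ∀ a, ¬ I a a)
    (hvalid : ValidIndependence M I)
    (σ τ : List A)
    (hrun : (M.statesFrom M.init σ).Nonempty)
    (hτ : IsInterleaving M I σ τ) :
    (M.statesFrom M.init τ).Nonempty ∧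
      M.statesFrom M.init τ = M.statesFrom M.init σ :=
  interleaving_is_run_same_states_general M I hsymm hvalid σ τ hrun hτ
end

section
/- Let C be a finite configuration of the unfolding of a program under a valid independence relation, and let a be an action enabled at state(C). Then there exists exactly one event e ∈ en(C) with h(e) = a. -/
/-- Causal closedness. -/
def CClosed {E : Type*} (lt : E → E → Prop) (C : Set E) : Prop :=
  ∀ e ∈ C, ∀ e', lt e' e → e' ∈ C

/-- Conflict-freeness. -/
def CFree {E : Type*} (confl : E → E → Prop) (C : Set E) : Prop :=
  ∀ e ∈ C, ∀ e' ∈ C, ¬ confl e e'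

/-- A configuration: finite, causally closed, conflict-free. -/
def Cfg {E : Type*} (lt confl : E → E → Prop) (C : Set E) : Prop :=
  C.Finite ∧ CClosed lt C ∧ CFree confl C

/-- The unfolding of a program under a valid independence relation, presented
abstractly: a prime event structure with labels in `A`, an independence
relation, a state function `st` on configurations and an enabledness predicate,
satisfying the closure properties of the inductive unfolding construction. -/
structure UnfSys (E A S : Type*) where
  lt : E → E → Prop
  confl : E → E → Prop
  lbl : E → A
  indep : A → A → Prop
  st : Set E → Set S
  en : A → Set S → Prop
  lt_trans : ∀ {a b c : E}, lt a b → lt b c → lt a c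
  lt_irrefl : ∀ a : E, ¬ lt a a
  confl_symm : ∀ {a b : E}, confl a b → confl b a
  confl_irrefl : ∀ a : E, ¬ confl a a
  indep_symm : ∀ a b, indep a b → indep b a
  indep_irrefl : ∀ a, ¬ indep a a
  causes_fin : ∀ e : E, {x | lt x e}.Finite
  causes_cfg : ∀ e : E, Cfg lt confl {x | lt x e}
  /-- Events of the unfolding are identified by their action and causal history. -/
  event_ext : ∀ e e' : E, lbl e = lbl e' → {x | lt x e} = {x | lt x e'} → e = e'
  /-- Conflict is as in the unfolding: distinct, causally unrelated, dependent. -/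
  confl_def : ∀ e e' : E, confl e e' ↔
    (e ≠ e' ∧ ¬ lt e e' ∧ ¬ lt e' e ∧ ¬ indep (lbl e) (lbl e'))
  /-- Unfolding fixpoint rule: any action enabled at the state of a configuration
  and dependent on all its maximal events gives rise to an event. -/
  create : ∀ (C : Set E) (a : A), Cfg lt confl C → en a (st C) →
    (∀ e' ∈ C, (∀ e'' ∈ C, ¬ lt e' e'') → ¬ indep a (lbl e')) →
    ∃ e : E, lbl e = a ∧ {x | lt x e} = C
  /-- Every event's label is dependent on the labels of the maximal events of its history. -/
  hist_dep : ∀ e : E, ∀ e', lt e' e →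
    (∀ e'', lt e' e'' → ¬ lt e'' e) → ¬ indep (lbl e) (lbl e')
  /-- Validity of the independence: an action independent of a maximal event of a
  configuration remains enabled after removing that event. -/
  drop_indep : ∀ (C : Set E) (a : A) (e' : E), Cfg lt confl C → e' ∈ C →
    (∀ e'' ∈ C, ¬ lt e' e'') → indep a (lbl e') → en a (st C) →
    en a (st (C \ {e'}))

/-!
Existence: peel off, one at a time, maximal events of `C` whose label is independent of `a`;
validity of the independence keeps `a` enabled, so we reach a subconfiguration `D` on whose
maximal events `a` depends, and the fixpoint rule yields an event `e` with label `a` and history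
`D`. Every event of `C \ D` is independent of `a`, so `e` is in conflict with nothing in `C`.

Uniqueness: if `f` and `g` are enabled at `C` with label `a` and `x` is a `<`-maximal event of
`[f] \ [g]`, then `x` is maximal in `[f]`, so `a` depends on `lbl x`; but `x ∈ C` is causally
unrelated to `g`, and `a` is independent of `lbl x` because `g` is not in conflict with `x`.
Hence `[f] = [g]`, and events are determined by label and history.
-/

theorem Set.Finite.exists_maximal_of_trans_irrefl {E : Type*} {r : E → E → Prop}
    (htrans : ∀ {a b c : E}, r a b → r b c → r a c) (hirrefl : ∀ a : E, ¬ r a a)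
    {T : Set E} (hT : T.Finite) (hne : T.Nonempty) : ∃ x ∈ T, ∀ y ∈ T, ¬ r x y := by
  have : IsStrictOrder E (flip r) :=
    { trans := fun _ _ _ h₁ h₂ => htrans h₂ h₁, irrefl := hirrefl }
  obtain ⟨x, hx, hmin⟩ :=
    (Set.wellFoundedOn_iff.mp (hT.wellFoundedOn (r := flip r))).has_min T hne
  exact ⟨x, hx, fun y hy hxy => hmin y hy ⟨hxy, hy, hx⟩⟩

section Cfg

variable {E : Type*} {lt confl : E → E → Prop} {C : Set E} {e : E}

theorem Cfg.diff_singleton_of_maximal (hC : Cfg lt confl C) (hmax : ∀ y ∈ C, ¬ lt e y) :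
    Cfg lt confl (C \ {e}) := by
  refine ⟨hC.1.sdiff, ?_, fun x hx y hy => hC.2.2 x hx.1 y hy.1⟩
  intro x hx y hyx
  refine ⟨hC.2.1 x hx.1 y hyx, ?_⟩
  rintro rfl
  exact hmax x hx.1 hyx

theorem Cfg.union_singleton (hsymm : ∀ {a b : E}, confl a b → confl b a)
    (hirrefl : ∀ a : E, ¬ confl a a) (hC : Cfg lt confl C) (hcauses : {x | lt x e} ⊆ C)
    (hnconfl : ∀ x ∈ C, ¬ confl e x) : Cfg lt confl (C ∪ {e}) := by
  refine ⟨hC.1.union (Set.finite_singleton e), ?_, ?_⟩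
  · rintro x (hx | rfl) y hyx
    · exact Or.inl (hC.2.1 x hx y hyx)
    · exact Or.inl (hcauses hyx)
  · rintro x (hx | rfl) y (hy | rfl)
    · exact hC.2.2 x hx y hy
    · exact fun h => hnconfl x hx (hsymm h)
    · exact hnconfl y hy
    · exact hirrefl _

end Cfg

namespace UnfSys

variable {E A S : Type*} (U : UnfSys E A S)

/-- `e ∈ en(C)`. -/
def Enabled (C : Set E) (e : E) : Prop :=
  e ∉ C ∧ {x | U.lt x e} ⊆ C ∧ Cfg U.lt U.confl (C ∪ {e})

theorem exists_dependent_subcfg (a : A) (C : Set E) (hC : Cfg U.lt U.confl C)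
    (ha : U.en a (U.st C)) :
    ∃ D ⊆ C, Cfg U.lt U.confl D ∧ U.en a (U.st D) ∧
      (∀ e ∈ D, (∀ e' ∈ D, ¬ U.lt e e') → ¬ U.indep a (U.lbl e)) ∧
      (∀ x ∈ C \ D, U.indep a (U.lbl x)) := by
  induction hn : C.ncard using Nat.strong_induction_on generalizing C with
  | _ n ih =>
    by_cases hdep : ∀ e ∈ C, (∀ e' ∈ C, ¬ U.lt e e') → ¬ U.indep a (U.lbl e)
    · exact ⟨C, subset_rfl, hC, ha, hdep, fun x hx => absurd hx.1 hx.2⟩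
    push Not at hdep
    obtain ⟨e, heC, hmax, hind⟩ := hdep
    have hcard : (C \ {e}).ncard < n := hn ▸ Set.ncard_sdiff_singleton_lt_of_mem heC hC.1
    obtain ⟨D, hDC, hD, hDa, hDdep, hDind⟩ :=
      ih _ hcard (C \ {e}) (hC.diff_singleton_of_maximal hmax)
        (U.drop_indep C a e hC heC hmax hind ha) rfl
    refine ⟨D, hDC.trans Set.sdiff_subset, hD, hDa, hDdep, fun x hx => ?_⟩
    by_cases hxe : x = e
    · exact hxe ▸ hind
    · exact hDind x ⟨⟨hx.1, hxe⟩, hx.2⟩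

theorem exists_enabled_of_en {a : A} {C : Set E} (hC : Cfg U.lt U.confl C)
    (ha : U.en a (U.st C)) : ∃ e, U.Enabled C e ∧ U.lbl e = a := by
  obtain ⟨D, hDC, hD, hDa, hDdep, hDind⟩ := U.exists_dependent_subcfg a C hC ha
  obtain ⟨e, rfl, hcauses⟩ := U.create D a hD hDa hDdep
  have hnconfl : ∀ x ∈ C, ¬ U.confl e x := by
    intro x hx hconfl
    obtain ⟨-, -, hxe, hdep⟩ := (U.confl_def e x).mp hconfl
    exact hdep (hDind x ⟨hx, fun hxD => hxe ((Set.ext_iff.mp hcauses x).mpr hxD)⟩)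
  have heC : e ∉ C := by
    intro heC
    have heD : e ∈ D := by_contra fun heD => U.indep_irrefl _ (hDind e ⟨heC, heD⟩)
    exact U.lt_irrefl e ((Set.ext_iff.mp hcauses e).mpr heD)
  have hcausesC : {x | U.lt x e} ⊆ C := hcauses ▸ hDC
  exact ⟨e, ⟨heC, hcausesC, hC.union_singleton U.confl_symm U.confl_irrefl hcausesC hnconfl⟩,
    rfl⟩

theorem causes_subset_of_enabled {C : Set E} {f g : E} (hC : CClosed U.lt C)
    (hf : U.Enabled C f) (hg : U.Enabled C g) (hfg : U.lbl f = U.lbl g) :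
    {x | U.lt x f} ⊆ {x | U.lt x g} := by
  by_contra hsub
  obtain ⟨x, ⟨hxf, hxg⟩, hmax⟩ :=
    ((U.causes_fin f).sdiff (t := {x | U.lt x g})).exists_maximal_of_trans_irrefl (r := U.lt)
      U.lt_trans U.lt_irrefl (Set.not_subset.mp hsub)
  have hxmax : ∀ y, U.lt x y → ¬ U.lt y f := fun y hxy hyf =>
    hmax y ⟨hyf, fun hyg => hxg ((U.causes_cfg g).2.1 y hyg x hxy)⟩ hxy
  have hxC : x ∈ C := hf.2.1 hxf
  have hgx : g ≠ x := fun h => hg.1 (h ▸ hxC)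
  have hnlt : ¬ U.lt g x := fun h => hg.1 (hC x hxC g h)
  have hindep : U.indep (U.lbl g) (U.lbl x) := by
    by_contra hdep
    exact hg.2.2.2.2 g (Or.inr rfl) x (Or.inl hxC)
      ((U.confl_def g x).mpr ⟨hgx, hnlt, hxg, hdep⟩)
  exact U.hist_dep f x hxf hxmax (hfg ▸ hindep)

theorem enabled_eq {C : Set E} {f g : E} (hC : CClosed U.lt C) (hf : U.Enabled C f)
    (hg : U.Enabled C g) (hfg : U.lbl f = U.lbl g) : f = g :=
  U.event_ext f g hfg ((U.causes_subset_of_enabled hC hf hg hfg).antisymm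
    (U.causes_subset_of_enabled hC hg hf hfg.symm))

end UnfSys

/-- if `C` is a finite configuration of the unfolding and `a` is
an action enabled at `state(C)`, then there is exactly one event `e ∈ en(C)`
with label `a`. -/
theorem exists_unique_enabled_event {E A S : Type*} (U : UnfSys E A S)
    (C : Set E) (a : A) (hC : Cfg U.lt U.confl C) (ha : U.en a (U.st C)) :
    ∃! e : E,
      (e ∉ C ∧ {x | U.lt x e} ⊆ C ∧ Cfg U.lt U.confl (C ∪ {e})) ∧
        U.lbl e = a := by
  obtain ⟨e, he, rfl⟩ := U.exists_enabled_of_en hC ha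
  exact ⟨e, ⟨he, rfl⟩, fun f hf => U.enabled_eq hC.2.1 hf.1 he hf.2⟩
end

section
/- In the POSIX-threading semantics, a release action (i, ⟨rel, l⟩) and a signal action (j, ⟨sig, c, k⟩) on distinct threads i ≠ j commute at every state: each rule only modifies disjoint components of the state (lock map u vs. condition-variable map v) plus the program counter of its own thread, so firing them in either order reaches the same state and neither affects the other's enabledness. -/
/-- A state of the POSIX-threading LTS semantics: program counters, memory,
lock ownership (`0` = free) and condition-variable wait sets (positive ids are
waiting threads, negated ids are already-notified threads). -/
structure PState (L Mem Lock CV : Type*) where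
  p : ℕ → L
  m : Mem
  u : Lock → ℕ
  v : CV → Set ℤ

/-- The release rule REL: thread `i` at location `n`, holding lock `l`
(`u l = i`), frees it (`u l := 0`) and advances its program counter. -/
def RelStep {L Mem Lock CV : Type*} [DecidableEq Lock] (i : ℕ) (l : Lock)
    (n n' : L) (s s' : PState L Mem Lock CV) : Prop :=
  s.p i = n ∧ s.u l = i ∧
    s' = { s with p := Function.update s.p i n', u := Function.update s.u l 0 }

/-- The signal rule SIG: thread `j` at location `n` signals condition variable
`c`. If `k = 0` the signal is lost (no positive id waits on `c` and `v` is
unchanged); if `k > 0` then `k ∈ v c` is woken up, i.e. replaced by `-k`. In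
both cases the program counter of `j` advances. -/
def SigStep {L Mem Lock CV : Type*} [DecidableEq CV] (j k : ℕ) (c : CV)
    (n n' : L) (s s' : PState L Mem Lock CV) : Prop :=
  s.p j = n ∧
    ((k = 0 ∧ (∀ z ∈ s.v c, ¬ (0 : ℤ) < z) ∧
        s' = { s with p := Function.update s.p j n' }) ∨
     (0 < k ∧ (k : ℤ) ∈ s.v c ∧
        s' = { s with p := Function.update s.p j n',
                      v := Function.update s.v c
                        ((s.v c \ {(k : ℤ)}) ∪ {-(k : ℤ)}) }))

/-!
REL changes only `p i` and `u`, SIG only `p j` and `v`. Hence for `i ≠ j` each step preserves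
the other's guard, and the deterministic effect of REL commutes with either branch of SIG: both
orders give the same state because updates of `p` at distinct threads commute.
-/

namespace PState

variable {L Mem Lock CV : Type*} [DecidableEq Lock]

def release (i : ℕ) (l : Lock) (m' : L) (s : PState L Mem Lock CV) : PState L Mem Lock CV :=
  { s with p := Function.update s.p i m', u := Function.update s.u l 0 }

theorem release_update {i j : ℕ} {l : Lock} {m' n' : L} (hij : i ≠ j)
    (s : PState L Mem Lock CV) (f : ℕ → L) (V : CV → Set ℤ) :
    ({ s with p := Function.update f j n', v := V } : PState L Mem Lock CV).release i l m' =
      { s.release i l m' with p := Function.update (Function.update f i m') j n', v := V } := by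
  simp only [release, Function.update_comm hij]

end PState

section Steps

variable {L Mem Lock CV : Type*} {i j k : ℕ} {l : Lock} {c : CV} {n n' m m' : L}
  {s t t' : PState L Mem Lock CV}

theorem relStep_iff [DecidableEq Lock] :
    RelStep i l m m' s t ↔ s.p i = m ∧ s.u l = i ∧ t = s.release i l m' :=
  Iff.rfl

theorem exists_relStep_iff [DecidableEq Lock] :
    (∃ t, RelStep i l m m' s t) ↔ s.p i = m ∧ s.u l = i := by
  simp [relStep_iff]

variable [DecidableEq CV]

theorem SigStep.p_apply_of_ne (h : SigStep j k c n n' s t) (hij : i ≠ j) : t.p i = s.p i := by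
  obtain ⟨-, ⟨-, -, rfl⟩ | ⟨-, -, rfl⟩⟩ := h <;> exact Function.update_of_ne hij ..

theorem SigStep.u_eq (h : SigStep j k c n n' s t) : t.u = s.u := by
  obtain ⟨-, ⟨-, -, rfl⟩ | ⟨-, -, rfl⟩⟩ := h <;> rfl

theorem SigStep.relStep_iff [DecidableEq Lock] (h : SigStep j k c n n' s t) (hij : i ≠ j) :
    RelStep i l m m' t t' ↔ s.p i = m ∧ s.u l = i ∧ t' = t.release i l m' := by
  rw [_root_.relStep_iff, h.p_apply_of_ne hij, h.u_eq]

theorem sigStep_release_iff [DecidableEq Lock] (hij : i ≠ j) :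
    SigStep j k c n n' (s.release i l m') t' ↔
      ∃ t, SigStep j k c n n' s t ∧ t' = t.release i l m' := by
  have hp : (s.release i l m').p j = s.p j := Function.update_of_ne hij.symm ..
  simp only [SigStep, hp]
  constructor
  · rintro ⟨hn, ⟨hk, hv, rfl⟩ | ⟨hk, hv, rfl⟩⟩
    · exact ⟨_, ⟨hn, .inl ⟨hk, hv, rfl⟩⟩, (PState.release_update hij _ _ _).symm⟩
    · exact ⟨_, ⟨hn, .inr ⟨hk, hv, rfl⟩⟩, (PState.release_update hij _ _ _).symm⟩
  · rintro ⟨t, ⟨hn, ⟨hk, hv, rfl⟩ | ⟨hk, hv, rfl⟩⟩, rfl⟩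
    · exact ⟨hn, .inl ⟨hk, hv, PState.release_update hij _ _ _⟩⟩
    · exact ⟨hn, .inr ⟨hk, hv, PState.release_update hij _ _ _⟩⟩

end Steps

/-- a release action of thread `i` and a signal action of a
distinct thread `j` commute at every state: neither affects the other's
enabledness, and firing them in either order reaches the same states. -/
theorem rel_sig_commute {L Mem Lock CV : Type*}
    [DecidableEq Lock] [DecidableEq CV]
    (i j k : ℕ) (l : Lock) (c : CV) (n₁ n₁' n₂ n₂' : L)
    (hij : i ≠ j) (s : PState L Mem Lock CV) :
    (∀ s', RelStep i l n₁ n₁' s s' →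
        ((∃ t, SigStep j k c n₂ n₂' s t) ↔ (∃ t, SigStep j k c n₂ n₂' s' t))) ∧
    (∀ s', SigStep j k c n₂ n₂' s s' →
        ((∃ t, RelStep i l n₁ n₁' s t) ↔ (∃ t, RelStep i l n₁ n₁' s' t))) ∧
    ((∃ t, RelStep i l n₁ n₁' s t) → (∃ t, SigStep j k c n₂ n₂' s t) →
      {s'' | ∃ t, RelStep i l n₁ n₁' s t ∧ SigStep j k c n₂ n₂' t s''} =
        {s'' | ∃ t, SigStep j k c n₂ n₂' s t ∧ RelStep i l n₁ n₁' t s''}) := by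
  refine ⟨fun s' hs' => ?_, fun s' hs' => ?_, fun _ _ => Set.ext fun s'' => ⟨?_, ?_⟩⟩
  · obtain ⟨-, -, rfl⟩ := relStep_iff.1 hs'
    simp [sigStep_release_iff hij]
  · simp [exists_relStep_iff, hs'.relStep_iff hij]
  · rintro ⟨t, ⟨hm, hu, rfl⟩, hsig⟩
    obtain ⟨t, ht, rfl⟩ := (sigStep_release_iff hij).1 hsig
    exact ⟨t, ht, (ht.relStep_iff hij).2 ⟨hm, hu, rfl⟩⟩
  · rintro ⟨t, ht, hrel⟩
    obtain ⟨hm, hu, rfl⟩ := (ht.relStep_iff hij).1 hrel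
    exact ⟨s.release i l n₁', ⟨hm, hu, rfl⟩, (sigStep_release_iff hij).2 ⟨t, ht, rfl⟩⟩
end

section
/- Define the dependence relation on POSIX actions as in the paper (two actions are dependent if they belong to the same thread, or both operate on the same lock, or are a matched wait/notify pair on the same condition variable, etc.), and independence as its complement. Then for a data-race-free program, independence is a valid independence relation: it is symmetric, irreflexive, and every independent pair of actions commutes at every reachable state. -/
/-! STATEMENT 17: validity of the POSIX independence relation for
data-race-free programs. We formalize the programs, the LTS semantics (rules
LOC, ACQ, REL, W1, W2, SIG, SIG-LOST, BRO), the dependence table of the paper,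
independence as its complement, reachability, commuting of actions, and
data-race-freedom. -/

/-- Operations of thread statements. -/
inductive Op (Lock CV : Type*) where
  | loc
  | lock (l : Lock)
  | unlock (l : Lock)
  | wait (c : CV) (l : Lock)
  | signal (c : CV)
  | bcast (c : CV)

/-- A thread statement: thread id, source/destination locations, operation and
memory relation. -/
structure Stmt (L Mem Lock CV : Type*) where
  tid : ℕ
  src : L
  dst : L
  op : Op Lock CV
  rel : Set (Mem × Mem)

/-- Effects of actions. -/
inductive Eff (L Mem Lock CV : Type*) where
  | loc (t : Stmt L Mem Lock CV)
  | acq (l : Lock)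
  | rel (l : Lock)
  | w1 (c : CV) (l : Lock)
  | w2 (c : CV) (l : Lock)
  | sig (c : CV) (k : ℕ)
  | bro (c : CV) (W : Set ℕ)

/-- An action is a thread identifier together with an effect. -/
abbrev Act (L Mem Lock CV : Type*) := ℕ × Eff L Mem Lock CV

/-- A concurrent program. -/
structure Prog (L Mem Lock CV : Type*) where
  T : Set (Stmt L Mem Lock CV)
  m0 : Mem
  p0 : ℕ → L

variable {L Mem Lock CV : Type*}

/-- The transition relation of the LTS semantics `M_P`. -/
inductive Step [DecidableEq Lock] [DecidableEq CV] (P : Prog L Mem Lock CV) :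
    PState L Mem Lock CV → Act L Mem Lock CV → PState L Mem Lock CV → Prop where
  | loc (t : Stmt L Mem Lock CV) (s : PState L Mem Lock CV) (m' : Mem) :
      t ∈ P.T → t.op = Op.loc → s.p t.tid = t.src → (s.m, m') ∈ t.rel →
      Step P s (t.tid, Eff.loc t)
        { s with p := Function.update s.p t.tid t.dst, m := m' }
  | acq (t : Stmt L Mem Lock CV) (s : PState L Mem Lock CV) (l : Lock) :
      t ∈ P.T → t.op = Op.lock l → s.p t.tid = t.src → s.u l = 0 →
      Step P s (t.tid, Eff.acq l)
        { s with p := Function.update s.p t.tid t.dst,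
                 u := Function.update s.u l t.tid }
  | rel (t : Stmt L Mem Lock CV) (s : PState L Mem Lock CV) (l : Lock) :
      t ∈ P.T → t.op = Op.unlock l → s.p t.tid = t.src → s.u l = t.tid →
      Step P s (t.tid, Eff.rel l)
        { s with p := Function.update s.p t.tid t.dst,
                 u := Function.update s.u l 0 }
  | w1 (t : Stmt L Mem Lock CV) (s : PState L Mem Lock CV) (c : CV) (l : Lock) :
      t ∈ P.T → t.op = Op.wait c l → s.p t.tid = t.src → s.u l = t.tid →
      Step P s (t.tid, Eff.w1 c l)
        { s with u := Function.update s.u l 0,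
                 v := Function.update s.v c (s.v c ∪ {(t.tid : ℤ)}) }
  | w2 (t : Stmt L Mem Lock CV) (s : PState L Mem Lock CV) (c : CV) (l : Lock) :
      t ∈ P.T → t.op = Op.wait c l → s.p t.tid = t.src → s.u l = 0 →
      -(t.tid : ℤ) ∈ s.v c →
      Step P s (t.tid, Eff.w2 c l)
        { s with p := Function.update s.p t.tid t.dst,
                 u := Function.update s.u l t.tid,
                 v := Function.update s.v c (s.v c \ {-(t.tid : ℤ)}) }
  | sig (t : Stmt L Mem Lock CV) (s : PState L Mem Lock CV) (c : CV) (j : ℕ) :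
      t ∈ P.T → t.op = Op.signal c → s.p t.tid = t.src → 0 < j →
      (j : ℤ) ∈ s.v c →
      Step P s (t.tid, Eff.sig c j)
        { s with p := Function.update s.p t.tid t.dst,
                 v := Function.update s.v c ((s.v c \ {(j : ℤ)}) ∪ {-(j : ℤ)}) }
  | sigLost (t : Stmt L Mem Lock CV) (s : PState L Mem Lock CV) (c : CV) :
      t ∈ P.T → t.op = Op.signal c → s.p t.tid = t.src →
      (∀ z ∈ s.v c, ¬ (0 : ℤ) < z) →
      Step P s (t.tid, Eff.sig c 0)
        { s with p := Function.update s.p t.tid t.dst }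
  | bro (t : Stmt L Mem Lock CV) (s : PState L Mem Lock CV) (c : CV) :
      t ∈ P.T → t.op = Op.bcast c → s.p t.tid = t.src →
      Step P s (t.tid, Eff.bro c {j : ℕ | 0 < j ∧ (j : ℤ) ∈ s.v c})
        { s with p := Function.update s.p t.tid t.dst,
                 v := Function.update s.v c
                   ((s.v c \ {z | 0 < z}) ∪ {z | -z ∈ s.v c ∧ 0 < -z}) }

section
variable [DecidableEq Lock] [DecidableEq CV]

/-- Enabledness of an action at a state. -/
def Enabled (P : Prog L Mem Lock CV) (a : Act L Mem Lock CV)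
    (s : PState L Mem Lock CV) : Prop :=
  ∃ s', Step P s a s'

/-- The initial state of `M_P`. -/
def initState (P : Prog L Mem Lock CV) : PState L Mem Lock CV :=
  ⟨P.p0, P.m0, fun _ => 0, fun _ => ∅⟩

/-- Reachability in `M_P`. -/
def Reachable (P : Prog L Mem Lock CV) (s : PState L Mem Lock CV) : Prop :=
  Relation.ReflTransGen (fun x y => ∃ a, Step P x a y) (initState P) s

/-- `a` commutes with `a'` at state `s`: firing `a` preserves enabledness of
`a'`, and if both are enabled then both firing orders reach the same states. -/
def CommuteAt (P : Prog L Mem Lock CV) (a a' : Act L Mem Lock CV)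
    (s : PState L Mem Lock CV) : Prop :=
  (∀ s', Step P s a s' → (Enabled P a' s ↔ Enabled P a' s')) ∧
  (Enabled P a s → Enabled P a' s →
    {s'' | ∃ t, Step P s a t ∧ Step P t a' s''} =
      {s'' | ∃ t, Step P s a' t ∧ Step P t a s''})

end

/-- `e'` operates on lock `l`. -/
def TouchesLock (l : Lock) : Eff L Mem Lock CV → Prop
  | Eff.acq l' => l' = l
  | Eff.rel l' => l' = l
  | Eff.w1 _ l' => l' = l
  | Eff.w2 _ l' => l' = l
  | _ => False

/-- One half of the dependence table of the paper (for actions of distinct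
threads); the full dependence relation is its symmetric closure together with
same-thread dependence. -/
def Dep0 : Act L Mem Lock CV → Act L Mem Lock CV → Prop
  | (_, Eff.loc _), _ => False
  | (_, Eff.acq l), (_, e') => TouchesLock l e'
  | (_, Eff.rel l), (_, e') => TouchesLock l e'
  | (i, Eff.w1 c l), (_, e') =>
      TouchesLock l e' ∨ e' = Eff.sig c 0 ∨ e' = Eff.sig c i ∨
        ∃ W, e' = Eff.bro c W
  | (i, Eff.w2 c l), (_, e') =>
      TouchesLock l e' ∨ e' = Eff.sig c i ∨ ∃ W, i ∈ W ∧ e' = Eff.bro c W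
  | (_, Eff.sig c 0), (_, e') =>
      (∃ l, e' = Eff.w1 c l) ∨ (∃ k', k' ≠ 0 ∧ e' = Eff.sig c k') ∨
        (∃ W, W ≠ (∅ : Set ℕ) ∧ e' = Eff.bro c W)
  | (_, Eff.sig c (k + 1)), (j, e') =>
      (∃ l, j = k + 1 ∧ (e' = Eff.w1 c l ∨ e' = Eff.w2 c l)) ∨
        e' = Eff.sig c 0 ∨ e' = Eff.sig c (k + 1) ∨ ∃ W, e' = Eff.bro c W
  | (_, Eff.bro c W), (j, e') =>
      (W = ∅ ∧
        ((∃ l, e' = Eff.w1 c l) ∨ (∃ k', k' ≠ 0 ∧ e' = Eff.sig c k') ∨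
          (∃ W', W' ≠ (∅ : Set ℕ) ∧ e' = Eff.bro c W'))) ∨
      (W ≠ ∅ ∧
        ((∃ l, e' = Eff.w1 c l) ∨ (∃ l, j ∈ W ∧ e' = Eff.w2 c l) ∨
          (∃ k', e' = Eff.sig c k') ∨ ∃ W', e' = Eff.bro c W'))

/-- The dependence relation of the paper: same-thread pairs together with the
symmetric closure of the table. -/
def Dep (a b : Act L Mem Lock CV) : Prop :=
  a.1 = b.1 ∨ Dep0 a b ∨ Dep0 b a

/-- Independence is the complement of dependence. -/
def Indep (a b : Act L Mem Lock CV) : Prop := ¬ Dep a b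

/-- A program is data-race-free if any two local actions of distinct threads
commute at every reachable state. -/
def DataRaceFree [DecidableEq Lock] [DecidableEq CV]
    (P : Prog L Mem Lock CV) : Prop :=
  ∀ t t' : Stmt L Mem Lock CV, t ∈ P.T → t' ∈ P.T → t.tid ≠ t'.tid →
    ∀ s, Reachable P s →
      CommuteAt P (t.tid, Eff.loc t) (t'.tid, Eff.loc t') s

/-!
Apart from a local step, every action is a guarded update of disjoint parts of the state: the
program counter of its own thread, at most one lock, and the wait set of at most one condition
variable. Two such updates by different threads commute as soon as they use different locks and
their wait-set operations commute, and every pair of operations on one wait set that fails to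
commute is dependent in the table. A lost signal needs no separate treatment, since on the wait
set it acts like a broadcast that wakes nobody. Local steps touch the memory, so a pair of them
is covered by data-race-freedom instead.
-/

/-- The effects of rules W1, W2, SIG and BRO on a wait set are `enter`, `leave`, `signal` and
`broadcast`; SIG-LOST acts as `broadcast ∅`. -/
structure WaitSetOp where
  guard : Set ℤ → Prop
  upd : Set ℤ → Set ℤ

namespace WaitSetOp

structure Commute (x y : WaitSetOp) : Prop where
  guard_upd_left : ∀ V, x.guard V → (y.guard (x.upd V) ↔ y.guard V)
  guard_upd_right : ∀ V, y.guard V → (x.guard (y.upd V) ↔ x.guard V)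
  upd_comm : ∀ V, x.guard V → y.guard V → x.upd (y.upd V) = y.upd (x.upd V)

theorem Commute.symm {x y : WaitSetOp} (h : x.Commute y) : y.Commute x :=
  ⟨h.guard_upd_right, h.guard_upd_left, fun V hy hx => (h.upd_comm V hx hy).symm⟩

def enter (i : ℕ) : WaitSetOp := ⟨fun _ => True, fun V => V ∪ {(i : ℤ)}⟩

def leave (i : ℕ) : WaitSetOp := ⟨fun V => -(i : ℤ) ∈ V, fun V => V \ {-(i : ℤ)}⟩

def signal (k : ℕ) : WaitSetOp :=
  ⟨fun V => (k : ℤ) ∈ V, fun V => (V \ {(k : ℤ)}) ∪ {-(k : ℤ)}⟩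

def broadcast (W : Set ℕ) : WaitSetOp :=
  ⟨fun V => W = {j : ℕ | 0 < j ∧ (j : ℤ) ∈ V},
    fun V => (V \ {z | 0 < z}) ∪ {z | -z ∈ V ∧ 0 < -z}⟩

theorem enter_commute_enter (i j : ℕ) : (enter i).Commute (enter j) :=
  ⟨fun _ _ => Iff.rfl, fun _ _ => Iff.rfl, fun V _ _ => Set.union_right_comm V _ _⟩

theorem enter_commute_leave {i j : ℕ} (hij : i ≠ j) : (enter i).Commute (leave j) := by
  refine ⟨fun V _ => ?_, fun V _ => ?_, fun V _ _ => ?_⟩ <;>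
    simp only [enter, leave, Set.ext_iff, Set.mem_union, Set.mem_sdiff, Set.mem_singleton_iff] <;>
    grind

theorem enter_commute_signal {i k : ℕ} (hki : k ≠ i) :
    (enter i).Commute (signal k) := by
  refine ⟨fun V _ => ?_, fun V _ => ?_, fun V _ _ => ?_⟩ <;>
    simp only [enter, signal, Set.ext_iff, Set.mem_union, Set.mem_sdiff, Set.mem_singleton_iff] <;>
    grind

theorem leave_commute_leave {i j : ℕ} (hij : i ≠ j) : (leave i).Commute (leave j) := by
  refine ⟨fun V _ => ?_, fun V _ => ?_, fun V _ _ => Set.sdiff_sdiff_comm⟩ <;>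
    simp only [leave, Set.mem_sdiff, Set.mem_singleton_iff] <;> grind

theorem leave_commute_signal {i k : ℕ} (hk : 0 < k) (hki : k ≠ i) :
    (leave i).Commute (signal k) := by
  refine ⟨fun V _ => ?_, fun V _ => ?_, fun V _ _ => ?_⟩ <;>
    simp only [leave, signal, Set.ext_iff, Set.mem_union, Set.mem_sdiff, Set.mem_singleton_iff] <;>
    grind

theorem signal_commute_signal {k m : ℕ} (hk : 0 < k) (hm : 0 < m) (hkm : k ≠ m) :
    (signal k).Commute (signal m) := by
  refine ⟨fun V _ => ?_, fun V _ => ?_, fun V _ _ => ?_⟩ <;>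
    simp only [signal, Set.ext_iff, Set.mem_union, Set.mem_sdiff, Set.mem_singleton_iff] <;> grind

theorem leave_commute_broadcast {i : ℕ} {W : Set ℕ} (hiW : i ∉ W) :
    (leave i).Commute (broadcast W) := by
  refine ⟨fun V _ => ?_, fun V hV => ?_, fun V _ hV => ?_⟩
  · simp only [leave, broadcast, Set.ext_iff, Set.mem_sdiff, Set.mem_singleton_iff,
      Set.mem_ofPred_eq]
    grind
  all_goals
    subst hV
    simp only [leave, broadcast, Set.ext_iff, Set.mem_union, Set.mem_sdiff,
      Set.mem_singleton_iff, Set.mem_ofPred_eq] at hiW ⊢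
    grind

theorem broadcast_empty_guard_iff {V : Set ℤ} :
    (broadcast ∅).guard V ↔ ∀ z ∈ V, ¬ 0 < z := by
  simp only [broadcast, eq_comm (a := ∅), Set.eq_empty_iff_forall_notMem, Set.mem_ofPred_eq,
    not_and]
  refine ⟨fun h z hz hz0 => ?_, fun h j hj hjV => h j hjV (by omega)⟩
  exact h z.toNat (by omega) (by rwa [Int.toNat_of_nonneg hz0.le])

theorem broadcast_empty_upd {V : Set ℤ} (h : (broadcast ∅).guard V) :
    (broadcast ∅).upd V = V := by
  rw [broadcast_empty_guard_iff] at h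
  ext z
  simp only [broadcast, Set.mem_union, Set.mem_sdiff, Set.mem_ofPred_eq]
  grind

theorem broadcast_empty_commute_broadcast_empty : (broadcast ∅).Commute (broadcast ∅) where
  guard_upd_left V h := by rw [broadcast_empty_upd h]
  guard_upd_right V h := by rw [broadcast_empty_upd h]
  upd_comm V h _ := by rw [broadcast_empty_upd h, broadcast_empty_upd h]

end WaitSetOp

structure LockOp (Lock : Type*) where
  lock : Lock
  owner : ℕ
  newOwner : ℕ

structure Atom (L Mem Lock CV : Type*) where
  tid : ℕ
  src : L
  dst : Option L
  mem : Option (Set (Mem × Mem))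
  lock : Option (LockOp Lock)
  cv : Option (CV × WaitSetOp)

namespace Atom

variable (A B : Atom L Mem Lock CV)

def Guard (s : PState L Mem Lock CV) : Prop :=
  s.p A.tid = A.src ∧ (∀ x ∈ A.lock, s.u x.lock = x.owner) ∧
    ∀ x ∈ A.cv, x.2.guard (s.v x.1)

def MemStep (m m' : Mem) : Prop := A.mem.elim (m' = m) fun R => (m, m') ∈ R

structure Compat : Prop where
  tid_ne : A.tid ≠ B.tid
  mem_eq_none : A.mem = none ∨ B.mem = none
  lock_ne : ∀ x ∈ A.lock, ∀ y ∈ B.lock, x.lock ≠ y.lock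
  cv_commute : ∀ x ∈ A.cv, ∀ y ∈ B.cv, x.1 = y.1 → x.2.Commute y.2

variable {A B}

theorem memStep_iff_of_mem_eq_none (h : A.mem = none) {m m' : Mem} :
    A.MemStep m m' ↔ m' = m := by
  simp [MemStep, h]

theorem Compat.symm (h : A.Compat B) : B.Compat A where
  tid_ne := h.tid_ne.symm
  mem_eq_none := h.mem_eq_none.symm
  lock_ne x hx y hy := (h.lock_ne y hy x hx).symm
  cv_commute x hx y hy hxy := (h.cv_commute y hy x hx hxy.symm).symm

section
variable [DecidableEq Lock] [DecidableEq CV]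

variable (A) in
def post (m : Mem) (s : PState L Mem Lock CV) : PState L Mem Lock CV :=
  ⟨A.dst.elim s.p (Function.update s.p A.tid), m,
    A.lock.elim s.u fun x => Function.update s.u x.lock x.newOwner,
    A.cv.elim s.v fun x => Function.update s.v x.1 (x.2.upd (s.v x.1))⟩

variable (A) in
def Step (s s' : PState L Mem Lock CV) : Prop :=
  A.Guard s ∧ ∃ m, A.MemStep s.m m ∧ s' = A.post m s

theorem exists_step_iff (s : PState L Mem Lock CV) :
    (∃ s', A.Step s s') ↔ A.Guard s ∧ ∃ m, A.MemStep s.m m := by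
  simp [Step]

theorem Compat.guard_post_iff (h : A.Compat B) {s : PState L Mem Lock CV} (hA : A.Guard s)
    (m : Mem) : B.Guard (A.post m s) ↔ B.Guard s := by
  obtain ⟨-, -, hAv⟩ := hA
  refine and_congr ?_ (and_congr ?_ ?_)
  · rcases hd : A.dst with _ | d <;> simp [post, hd, Function.update_of_ne h.tid_ne.symm]
  · rcases hx : A.lock with _ | x
    · simp [post, hx]
    refine forall₂_congr fun y hy => ?_
    simp [post, hx, Function.update_of_ne (h.lock_ne x hx y hy).symm]
  · rcases hx : A.cv with _ | x
    · simp [post, hx]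
    refine forall₂_congr fun y hy => ?_
    by_cases hxy : x.1 = y.1
    · simp only [post, hx, Option.elim_some, ← hxy, Function.update_self]
      exact (h.cv_commute x hx y hy hxy).guard_upd_left _ (hAv x hx)
    · simp [post, hx, Function.update_of_ne (Ne.symm hxy)]

theorem Compat.post_post (h : A.Compat B) {s : PState L Mem Lock CV} (hA : A.Guard s)
    (hB : B.Guard s) (m m' m'' : Mem) : A.post m (B.post m' s) = B.post m (A.post m'' s) := by
  obtain ⟨-, -, hAv⟩ := hA
  obtain ⟨-, -, hBv⟩ := hB
  simp only [post, PState.mk.injEq, true_and]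
  refine ⟨?_, ?_, ?_⟩
  · rcases A.dst with _ | d <;> rcases B.dst with _ | d' <;>
      simp [Function.update_comm h.tid_ne]
  · rcases hx : A.lock with _ | x <;> rcases hy : B.lock with _ | y <;> simp only [Option.elim]
    exact (Function.update_comm (h.lock_ne x hx y hy) _ _ _).symm
  · rcases hx : A.cv with _ | x <;> rcases hy : B.cv with _ | y <;> simp only [Option.elim]
    by_cases hxy : x.1 = y.1
    · obtain ⟨c, x⟩ := x
      obtain ⟨c', y⟩ := y
      obtain rfl : c = c' := hxy
      simp only [Function.update_idem, Function.update_self]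
      exact congrArg _ ((h.cv_commute _ hx _ hy rfl).upd_comm _ (hAv _ hx) (hBv _ hy))
    · simp [Function.update_of_ne hxy, Function.update_of_ne (Ne.symm hxy),
        Function.update_comm hxy]

theorem Compat.step_swap (h : A.Compat B) {s t u : PState L Mem Lock CV} (hA : A.Step s t)
    (hB : B.Step t u) : ∃ t', B.Step s t' ∧ A.Step t' u := by
  obtain ⟨hgA, mA, hmA, rfl⟩ := hA
  obtain ⟨hgB', mB, hmB, rfl⟩ := hB
  have hgB : B.Guard s := (h.guard_post_iff hgA mA).mp hgB'
  rcases h.mem_eq_none with hAm | hBm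
  · obtain rfl := (memStep_iff_of_mem_eq_none hAm).mp hmA
    refine ⟨B.post mB s, ⟨hgB, mB, hmB, rfl⟩, (h.symm.guard_post_iff hgB mB).mpr hgA, mB,
      (memStep_iff_of_mem_eq_none hAm).mpr rfl, ?_⟩
    exact (h.post_post hgA hgB mB mB s.m).symm
  · obtain rfl := (memStep_iff_of_mem_eq_none hBm).mp hmB
    refine ⟨B.post s.m s, ⟨hgB, s.m, (memStep_iff_of_mem_eq_none hBm).mpr rfl, rfl⟩,
      (h.symm.guard_post_iff hgB s.m).mpr hgA, mB, hmA, ?_⟩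
    exact (h.post_post hgA hgB mB s.m mB).symm

theorem Compat.exists_step_iff (h : A.Compat B) {s t : PState L Mem Lock CV}
    (hA : A.Step s t) : (∃ u, B.Step s u) ↔ ∃ u, B.Step t u := by
  obtain ⟨hgA, mA, hmA, rfl⟩ := hA
  simp only [Atom.exists_step_iff, h.guard_post_iff hgA]
  refine and_congr_right fun _ => ?_
  rcases h.mem_eq_none with hAm | hBm
  · obtain rfl := (memStep_iff_of_mem_eq_none hAm).mp hmA
    rfl
  · simp [memStep_iff_of_mem_eq_none hBm, post]

end

end Atom

namespace Act

def lockOp : Act L Mem Lock CV → Option (LockOp Lock)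
  | (i, .acq l) => some ⟨l, 0, i⟩
  | (i, .rel l) => some ⟨l, i, 0⟩
  | (i, .w1 _ l) => some ⟨l, i, 0⟩
  | (i, .w2 _ l) => some ⟨l, 0, i⟩
  | _ => none

def cvOp : Act L Mem Lock CV → Option (CV × WaitSetOp)
  | (i, .w1 c _) => some (c, .enter i)
  | (i, .w2 c _) => some (c, .leave i)
  | (_, .sig c 0) => some (c, .broadcast ∅)
  | (_, .sig c (k + 1)) => some (c, .signal (k + 1))
  | (_, .bro c W) => some (c, .broadcast W)
  | _ => none

def atom (a : Act L Mem Lock CV) (t : Stmt L Mem Lock CV) : Atom L Mem Lock CV where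
  tid := a.1
  src := t.src
  dst := match a.2 with
    | .w1 .. => none
    | _ => some t.dst
  mem := match a.2 with
    | .loc _ => some t.rel
    | _ => none
  lock := a.lockOp
  cv := a.cvOp

theorem touchesLock_of_mem_lockOp {a : Act L Mem Lock CV} {x : LockOp Lock}
    (h : x ∈ a.lockOp) : TouchesLock x.lock a.2 := by
  obtain ⟨i, _ | _ | _ | _ | _ | _ | _⟩ := a <;> cases h <;> rfl

theorem dep0_of_mem_lockOp {a b : Act L Mem Lock CV} {x : LockOp Lock} (h : x ∈ a.lockOp)
    (hb : TouchesLock x.lock b.2) : Dep0 a b := by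
  obtain ⟨i, _ | _ | _ | _ | _ | _ | _⟩ := a <;> cases h <;> simp [Dep0, hb]

open WaitSetOp in
theorem commute_of_mem_cvOp {a b : Act L Mem Lock CV} (hij : a.1 ≠ b.1) (hab : ¬ Dep0 a b)
    (hba : ¬ Dep0 b a) {c : CV} {x y : WaitSetOp} (ha : (c, x) ∈ a.cvOp)
    (hb : (c, y) ∈ b.cvOp) : x.Commute y := by
  obtain ⟨i, _ | _ | _ | _ | _ | ⟨_, _ | k⟩ | _⟩ := a <;> cases ha <;>
    obtain ⟨j, _ | _ | _ | _ | _ | ⟨_, _ | k'⟩ | _⟩ := b <;> cases hb <;>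
    simp [Dep0, TouchesLock] at hij hab hba ⊢
  all_goals first
    | exact enter_commute_enter _ _
    | exact enter_commute_leave hij
    | exact (enter_commute_leave (Ne.symm hij)).symm
    | exact enter_commute_signal (by omega)
    | exact (enter_commute_signal (by omega)).symm
    | exact leave_commute_leave hij
    | exact leave_commute_signal k'.succ_pos (by omega)
    | exact (leave_commute_signal k.succ_pos (by omega)).symm
    | exact leave_commute_broadcast (by assumption)
    | exact leave_commute_broadcast (Set.notMem_empty i)
    | exact (leave_commute_broadcast (by assumption)).symm
    | exact (leave_commute_broadcast (Set.notMem_empty j)).symm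
    | exact signal_commute_signal k.succ_pos k'.succ_pos (by omega)
    | (subst_vars; exact broadcast_empty_commute_broadcast_empty)
    | (rw [hab.2, hba.2]; exact broadcast_empty_commute_broadcast_empty)

theorem exists_loc_of_atom_mem_ne_none {a : Act L Mem Lock CV} {t : Stmt L Mem Lock CV}
    (h : (a.atom t).mem ≠ none) : ∃ t', a.2 = .loc t' := by
  obtain ⟨i, _ | _ | _ | _ | _ | _ | _⟩ := a <;> simp_all [atom]

theorem compat_atom {a b : Act L Mem Lock CV} (hij : a.1 ≠ b.1) (hab : ¬ Dep0 a b)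
    (hba : ¬ Dep0 b a) (hloc : ¬ ∃ t t', a.2 = .loc t ∧ b.2 = .loc t')
    (t t' : Stmt L Mem Lock CV) : (a.atom t).Compat (b.atom t') where
  tid_ne := hij
  mem_eq_none := by
    by_contra! h
    obtain ⟨u, hu⟩ := exists_loc_of_atom_mem_ne_none h.1
    obtain ⟨u', hu'⟩ := exists_loc_of_atom_mem_ne_none h.2
    exact hloc ⟨u, u', hu, hu'⟩
  lock_ne x hx y hy hxy :=
    hab (dep0_of_mem_lockOp hx (hxy ▸ touchesLock_of_mem_lockOp hy))
  cv_commute x hx y hy hxy := by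
    obtain ⟨c, x⟩ := x
    obtain ⟨c', y⟩ := y
    obtain rfl : c = c' := hxy
    exact commute_of_mem_cvOp hij hab hba hx hy

end Act

def Stmt.Executes (t : Stmt L Mem Lock CV) : Eff L Mem Lock CV → Prop
  | .loc t' => t' = t ∧ t.op = .loc
  | .acq l => t.op = .lock l
  | .rel l => t.op = .unlock l
  | .w1 c l => t.op = .wait c l
  | .w2 c l => t.op = .wait c l
  | .sig c _ => t.op = .signal c
  | .bro c _ => t.op = .bcast c

theorem Dep.symm {a b : Act L Mem Lock CV} (h : Dep a b) : Dep b a := by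
  rcases h with h | h | h
  exacts [Or.inl h.symm, Or.inr (Or.inr h), Or.inr (Or.inl h)]

section
variable [DecidableEq Lock] [DecidableEq CV]

theorem Step.exists_atom {P : Prog L Mem Lock CV} {s s' : PState L Mem Lock CV}
    {a : Act L Mem Lock CV} (h : Step P s a s') :
    ∃ t ∈ P.T, t.tid = a.1 ∧ t.Executes a.2 ∧ (a.atom t).Step s s' := by
  cases h with
  | sig t _ c j ht hop hp hj hv =>
    obtain ⟨k, rfl⟩ := Nat.exists_eq_add_one_of_ne_zero hj.ne'
    refine ⟨t, ht, rfl, hop, ?_⟩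
    simp_all [Act.atom, Atom.Step, Atom.Guard, Atom.MemStep, Atom.post, Act.lockOp, Act.cvOp,
      WaitSetOp.signal]
  | sigLost t _ c ht hop hp hv =>
    have hg := WaitSetOp.broadcast_empty_guard_iff.mpr hv
    refine ⟨t, ht, rfl, hop,
      ⟨hp, by simp [Act.atom, Act.lockOp], by simpa [Act.atom, Act.cvOp]⟩, s.m, rfl, ?_⟩
    simp [Act.atom, Atom.post, Act.lockOp, Act.cvOp, WaitSetOp.broadcast_empty_upd hg]
  | _ =>
    refine ⟨_, ‹_›, rfl, ?_⟩
    simp_all [Stmt.Executes, Act.atom, Atom.Step, Atom.Guard, Atom.MemStep, Atom.post,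
      Act.lockOp, Act.cvOp, WaitSetOp.enter, WaitSetOp.leave, WaitSetOp.broadcast]

theorem Step.of_atom {P : Prog L Mem Lock CV} {s s' : PState L Mem Lock CV} {i : ℕ}
    {e : Eff L Mem Lock CV} {t : Stmt L Mem Lock CV} (ht : t ∈ P.T) (hti : t.tid = i)
    (he : t.Executes e) (h : (Act.atom (i, e) t).Step s s') : Step P s (i, e) s' := by
  subst hti
  obtain ⟨hg, m, hm, rfl⟩ := h
  cases e with
  | loc t' =>
    obtain ⟨rfl, hop⟩ := he
    exact Step.loc _ s m ht hop hg.1 hm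
  | acq l =>
    obtain rfl : m = s.m := hm
    exact Step.acq t s l ht he hg.1 (hg.2.1 _ rfl)
  | rel l =>
    obtain rfl : m = s.m := hm
    exact Step.rel t s l ht he hg.1 (hg.2.1 _ rfl)
  | w1 c l =>
    obtain rfl : m = s.m := hm
    exact Step.w1 t s c l ht he hg.1 (hg.2.1 _ rfl)
  | w2 c l =>
    obtain rfl : m = s.m := hm
    exact Step.w2 t s c l ht he hg.1 (hg.2.1 _ rfl) (hg.2.2 _ rfl)
  | sig c k =>
    obtain rfl : m = s.m := hm
    rcases k with _ | k
    · have hv := hg.2.2 _ rfl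
      convert Step.sigLost t s c ht he hg.1 (WaitSetOp.broadcast_empty_guard_iff.mp hv) using 1
      simp [Act.atom, Atom.post, Act.lockOp, Act.cvOp, WaitSetOp.broadcast_empty_upd hv]
    · exact Step.sig t s c (k + 1) ht he hg.1 k.succ_pos (hg.2.2 _ rfl)
  | bro c W =>
    obtain rfl : m = s.m := hm
    obtain rfl : W = {j : ℕ | 0 < j ∧ (j : ℤ) ∈ s.v c} := hg.2.2 _ rfl
    exact Step.bro t s c ht he hg.1

theorem step_iff_exists_atom {P : Prog L Mem Lock CV} {s s' : PState L Mem Lock CV}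
    {a : Act L Mem Lock CV} :
    Step P s a s' ↔ ∃ t ∈ P.T, t.tid = a.1 ∧ t.Executes a.2 ∧ (a.atom t).Step s s' :=
  ⟨Step.exists_atom, fun ⟨_, ht, hti, he, h⟩ => Step.of_atom ht hti he h⟩

theorem enabled_iff_exists_atom {P : Prog L Mem Lock CV} {a : Act L Mem Lock CV}
    {s : PState L Mem Lock CV} :
    Enabled P a s ↔
      ∃ t ∈ P.T, t.tid = a.1 ∧ t.Executes a.2 ∧ ∃ s', (a.atom t).Step s s' := by
  simp only [Enabled, step_iff_exists_atom]
  aesop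

theorem step_step_swap_of_compat {P : Prog L Mem Lock CV} {a b : Act L Mem Lock CV}
    (h : ∀ t t', (a.atom t).Compat (b.atom t')) {s u : PState L Mem Lock CV}
    (hab : ∃ x, Step P s a x ∧ Step P x b u) : ∃ x, Step P s b x ∧ Step P x a u := by
  simp only [step_iff_exists_atom] at hab ⊢
  obtain ⟨x, ⟨t, ht, hta, hte, hA⟩, t', ht', htb, hte', hB⟩ := hab
  obtain ⟨y, hB, hA⟩ := (h t t').step_swap hA hB
  exact ⟨y, ⟨t', ht', htb, hte', hB⟩, t, ht, hta, hte, hA⟩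

theorem commuteAt_of_compat {P : Prog L Mem Lock CV} {a b : Act L Mem Lock CV}
    (h : ∀ t t', (a.atom t).Compat (b.atom t')) (s : PState L Mem Lock CV) :
    CommuteAt P a b s := by
  refine ⟨fun s' hs' => ?_, fun _ _ => ?_⟩
  · obtain ⟨t, -, -, -, hA⟩ := step_iff_exists_atom.mp hs'
    simp only [enabled_iff_exists_atom]
    exact exists_congr fun t' => and_congr_right fun _ => and_congr_right fun _ =>
      and_congr_right fun _ => (h t t').exists_step_iff hA
  · ext u
    exact ⟨step_step_swap_of_compat h, step_step_swap_of_compat fun t' t => (h t t').symm⟩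

theorem commuteAt_of_forall_not_step_left {P : Prog L Mem Lock CV} {a : Act L Mem Lock CV}
    (h : ∀ s s', ¬ Step P s a s') (b : Act L Mem Lock CV) (s : PState L Mem Lock CV) :
    CommuteAt P a b s :=
  ⟨fun s' hs' => (h s s' hs').elim, fun ⟨s', hs'⟩ _ => (h s s' hs').elim⟩

theorem commuteAt_of_forall_not_step_right {P : Prog L Mem Lock CV} {b : Act L Mem Lock CV}
    (h : ∀ s s', ¬ Step P s b s') (a : Act L Mem Lock CV) (s : PState L Mem Lock CV) :
    CommuteAt P a b s :=
  ⟨fun _ _ => ⟨fun ⟨_, h'⟩ => (h _ _ h').elim, fun ⟨_, h'⟩ => (h _ _ h').elim⟩,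
    fun _ ⟨_, h'⟩ => (h _ _ h').elim⟩

theorem Step.tid_eq_of_loc {P : Prog L Mem Lock CV} {s s' : PState L Mem Lock CV} {i : ℕ}
    {t : Stmt L Mem Lock CV} (h : Step P s (i, .loc t) s') : t.tid = i ∧ t ∈ P.T := by
  cases h
  exact ⟨rfl, ‹_›⟩

theorem commuteAt_loc_loc {P : Prog L Mem Lock CV} (hdrf : DataRaceFree P) {i j : ℕ}
    (hij : i ≠ j) (t t' : Stmt L Mem Lock CV) {s : PState L Mem Lock CV} (hs : Reachable P s) :
    CommuteAt P (i, .loc t) (j, .loc t') s := by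
  by_cases ht : t.tid = i ∧ t ∈ P.T
  · by_cases ht' : t'.tid = j ∧ t' ∈ P.T
    · obtain ⟨rfl, ht⟩ := ht
      obtain ⟨rfl, ht'⟩ := ht'
      exact hdrf t t' ht ht' hij s hs
    · exact commuteAt_of_forall_not_step_right (fun _ _ h => ht' h.tid_eq_of_loc) _ s
  · exact commuteAt_of_forall_not_step_left (fun _ _ h => ht h.tid_eq_of_loc) _ s

end

/-- for a data-race-free program, the independence relation
derived from the paper's dependence table is a valid independence relation:
it is symmetric, irreflexive, and every independent pair of actions commutes
at every reachable state. -/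
theorem indep_valid [DecidableEq Lock] [DecidableEq CV]
    (P : Prog L Mem Lock CV) (hdrf : DataRaceFree P) :
    (∀ a b : Act L Mem Lock CV, Indep a b → Indep b a) ∧
    (∀ a : Act L Mem Lock CV, ¬ Indep a a) ∧
    (∀ a b : Act L Mem Lock CV, Indep a b →
      ∀ s, Reachable P s → CommuteAt P a b s) := by
  refine ⟨fun a b h hd => h hd.symm, fun a h => h (Or.inl rfl), fun a b h s hs => ?_⟩
  obtain ⟨i, ea⟩ := a
  obtain ⟨j, eb⟩ := b
  simp only [Indep, Dep, not_or] at h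
  obtain ⟨hij, hab, hba⟩ := h
  by_cases hloc : ∃ t t', ea = .loc t ∧ eb = .loc t'
  · obtain ⟨t, t', rfl, rfl⟩ := hloc
    exact commuteAt_loc_loc hdrf hij t t' hs
  · exact commuteAt_of_compat (Act.compat_atom hij hab hba hloc) s
end
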